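/- arXiv:1212.4215 — 4 statements merged into one kernel-verified Lean document; each statement's English description precedes it below -/
import Mathlib

section
/- Let (W,S) be an even Coxeter system, i.e. for all distinct s,t in S the order m_{st} of st is either even or infinite. Then for any subset T of S, the map defined on generators by sending s to s if s ∈ T and to the identity if s ∉ T extends to a group homomorphism g : W → W_T, where W_T is the standard parabolic subgroup generated by T. -/
open CoxeterSystem List

/-- A Coxeter matrix is *even* if every off-diagonal entry is even
(the entry `0`, denoting `∞`, counts as even, i.e. is also allowed). -/
def CoxeterMatrix.IsEven {B : Type*} (M : CoxeterMatrix B) : Prop :=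
  ∀ i i' : B, i ≠ i' → Even (M i i')

/-- The standard parabolic subgroup `W_T` generated by the simple reflections in `T`. -/
def CoxeterSystem.parabolic {B W : Type*} [Group W] {M : CoxeterMatrix B}
    (cs : CoxeterSystem M W) (T : Set B) : Subgroup W :=
  Subgroup.closure (cs.simple '' T)

/-- A subset `T` of generators is *spherical* if the parabolic subgroup `W_T` is finite. -/
def CoxeterSystem.IsSpherical {B W : Type*} [Group W] {M : CoxeterMatrix B}
    (cs : CoxeterSystem M W) (T : Set B) : Prop :=
  (cs.parabolic T : Set W).Finite

/-- The support of `w`: the set of generators occurring in a reduced expression for `w`. -/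
def CoxeterSystem.support {B W : Type*} [Group W] {M : CoxeterMatrix B}
    (cs : CoxeterSystem M W) (w : W) : Set B :=
  {i | ∃ ω : List B, cs.IsReduced ω ∧ cs.wordProd ω = w ∧ i ∈ ω}

open scoped Classical in
theorem stmt_0 {B W : Type*} [Group W] {M : CoxeterMatrix B} (cs : CoxeterSystem M W)
    (heven : M.IsEven) (T : Set B) :
    ∃ g : W →* W,
      (∀ i : B, g (cs.simple i) = if i ∈ T then cs.simple i else 1) ∧
      ∀ w : W, g w ∈ cs.parabolic T := by
  set f : B → W := fun i => if i ∈ T then cs.simple i else 1 with hf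
  have hlift : M.IsLiftable f := by
    intro i i'
    rcases eq_or_ne i i' with rfl | hne
    · rw [M.diagonal i, pow_one, hf]
      by_cases h : i ∈ T <;> simp [h, cs.simple_mul_simple_self]
    · have hev := heven i i' hne
      by_cases h : i ∈ T <;> by_cases h' : i' ∈ T <;>
        simp only [hf, h, h', if_true, if_false, mul_one, one_mul]
      · exact cs.simple_mul_simple_pow i i'
      · obtain ⟨k, hk⟩ := hev
        rw [hk, ← two_mul, pow_mul, cs.simple_sq, one_pow]
      · obtain ⟨k, hk⟩ := hev
        rw [hk, ← two_mul, pow_mul, cs.simple_sq, one_pow]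
      · exact one_pow _
  refine ⟨cs.lift ⟨f, hlift⟩, fun i => cs.lift_apply_simple hlift i, fun w => ?_⟩
  induction w using cs.simple_induction with
  | simple i =>
      rw [cs.lift_apply_simple hlift]
      by_cases h : i ∈ T
      · simp only [hf, h, if_true]
        exact Subgroup.subset_closure ⟨i, h, rfl⟩
      · simp only [hf, h, if_false]
        exact one_mem _
  | one => simp only [map_one]; exact one_mem _
  | mul u v hu hv => rw [map_mul]; exact mul_mem hu hv
end

section
/- Let (W,S) be a Coxeter system in which the order of every product of two distinct generators is at least 3 (or infinite). If w ∈ W satisfies ℓ(ws) > ℓ(w) and ℓ(wt) > ℓ(w) for distinct s,t ∈ S with m_{st} = ∞, then ℓ(w s t s t ⋯) = ℓ(w) + k for every alternating word of length k in s and t; in particular there exist elements of arbitrarily large length in the coset sequence w, ws, wst, wsts, …. -/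
open CoxeterSystem List

/-!
The key step is the induction `ℓ (w s t s ⋯ s t) = ℓ (w s t s ⋯ s) + 1` for `w` of minimal length in
its coset `w ⟨s, t⟩`. If it failed, the strong exchange condition would put `t` among the
reflections crossed by a reduced word for `w` followed by the alternating word: a reflection
crossed in the alternating part is of the form `(s t)ᵉ s`, and `t = (s t)ᵉ s` contradicts the
infinite order of `s t`; one crossed in `w` yields `x ∈ ⟨s, t⟩` with `ℓ (w x) < ℓ w`. An element
with no right descent in `{s, t}` is that minimal representative: it is the minimal one times an
alternating word, and a nonempty one would end in a descent.

The strong exchange condition comes from Tits' permutation representation of `W` on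
`W × ZMod 2`, the infinite order of `s t` from the geometric representation on `B →₀ ℝ`.
-/

namespace CoxeterMatrix

variable {B : Type*} (M : CoxeterMatrix B)

/-- The entry `0` (`m = ∞`) gives `-1`, since `π / 0 = 0` in `ℝ`. -/
noncomputable def cosCoeff (i j : B) : ℝ := -Real.cos (Real.pi / M i j)

noncomputable def pairing (i : B) : (B →₀ ℝ) →ₗ[ℝ] ℝ :=
  Finsupp.linearCombination ℝ (M.cosCoeff i)

noncomputable def geomReflection (i : B) : Module.End ℝ (B →₀ ℝ) :=
  LinearMap.id - (2 : ℝ) • (M.pairing i).smulRight (Finsupp.single i 1)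

open Complex in
/-- Identifies the plane spanned by `e i, e j` with `ℂ` so that, when `-cos θ` is the
coefficient of `i, j`, the product `geomReflection i * geomReflection j` becomes the rotation
by `2θ`. -/
noncomputable def planeCoord (i j : B) (θ : ℝ) (x : B →₀ ℝ) : ℂ :=
  (exp (θ * I))⁻¹ * M.pairing i x + M.pairing j x

variable {M}

lemma cosCoeff_self (i : B) : M.cosCoeff i i = 1 := by
  simp [cosCoeff]

lemma cosCoeff_comm (i j : B) : M.cosCoeff i j = M.cosCoeff j i := by
  rw [cosCoeff, cosCoeff, M.symmetric i j]

lemma cosCoeff_of_eq_zero {i j : B} (h : M i j = 0) : M.cosCoeff i j = -1 := by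
  simp [cosCoeff, h]

@[simp] lemma pairing_single (i j : B) (a : ℝ) :
    M.pairing i (Finsupp.single j a) = a * M.cosCoeff i j := by
  simp [pairing]

lemma geomReflection_apply (i : B) (x : B →₀ ℝ) :
    M.geomReflection i x = x - (2 * M.pairing i x) • Finsupp.single i 1 := by
  simp [geomReflection]

lemma pairing_geomReflection (i j : B) (x : B →₀ ℝ) :
    M.pairing j (M.geomReflection i x) = M.pairing j x - 2 * M.pairing i x * M.cosCoeff j i := by
  rw [geomReflection_apply, map_sub, map_smul, pairing_single, smul_eq_mul]
  ring

lemma geomReflection_mul_self (i : B) : M.geomReflection i * M.geomReflection i = 1 := by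
  refine LinearMap.ext fun x => ?_
  rw [Module.End.mul_apply, geomReflection_apply, pairing_geomReflection, cosCoeff_self,
    geomReflection_apply, Module.End.one_apply]
  module

lemma planeCoord_add (i j : B) (θ : ℝ) (x y : B →₀ ℝ) :
    M.planeCoord i j θ (x + y) = M.planeCoord i j θ x + M.planeCoord i j θ y := by
  simp only [planeCoord, map_add, Complex.ofReal_add]
  ring

open Complex in
lemma planeCoord_geomReflection_mul {i j : B} {θ : ℝ} (h : M.cosCoeff i j = -Real.cos θ)
    (x : B →₀ ℝ) :
    M.planeCoord i j θ ((M.geomReflection i * M.geomReflection j) x)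
      = exp (θ * I) ^ 2 * M.planeCoord i j θ x := by
  have hcos : cos (θ : ℂ) = (exp (θ * I) + (exp (θ * I))⁻¹) / 2 := by
    rw [Complex.cos, neg_mul, exp_neg]
  have h' : M.cosCoeff j i = -Real.cos θ := by rw [cosCoeff_comm, h]
  simp only [planeCoord, Module.End.mul_apply, pairing_geomReflection, cosCoeff_self, h, h']
  push_cast
  rw [hcos]
  field_simp [exp_ne_zero]
  ring

lemma planeCoord_geomReflection_mul_pow {i j : B} {θ : ℝ} (h : M.cosCoeff i j = -Real.cos θ)
    (n : ℕ) (x : B →₀ ℝ) :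
    M.planeCoord i j θ (((M.geomReflection i * M.geomReflection j) ^ n) x)
      = Complex.exp (θ * Complex.I) ^ (2 * n) * M.planeCoord i j θ x := by
  induction n with
  | zero => simp
  | succ n ih =>
    rw [pow_succ', Module.End.mul_apply, planeCoord_geomReflection_mul h, ih]
    ring

open Complex in
lemma eq_zero_of_planeCoord_eq_zero {i j : B} {θ : ℝ} (h : M.cosCoeff i j = -Real.cos θ)
    (hsin : Real.sin θ ≠ 0) {a b : ℝ}
    (hab : M.planeCoord i j θ (a • Finsupp.single i 1 + b • Finsupp.single j 1) = 0) :
    a = 0 ∧ b = 0 := by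
  have hinv : (exp (θ * I))⁻¹ = Real.cos θ - Real.sin θ * I := by
    rw [← exp_neg, ← neg_mul, exp_mul_I, ofReal_cos, ofReal_sin, cos_neg, sin_neg]
    ring
  have h' : M.cosCoeff j i = -Real.cos θ := by rw [cosCoeff_comm, h]
  simp only [planeCoord, map_add, map_smul, pairing_single, cosCoeff_self, h, h', smul_eq_mul,
    hinv] at hab
  have hre := congrArg re hab
  have him := congrArg im hab
  simp [cos_ofReal_re, sin_ofReal_re] at hre him
  obtain rfl : a = Real.cos θ * b := by linarith [him.resolve_left hsin]
  have hb : b * Real.sin θ ^ 2 = 0 := by linear_combination b * Real.sin_sq_add_cos_sq θ + hre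
  obtain rfl : b = 0 := by simpa [hsin] using hb
  simp

lemma exists_geomReflection_mul_pow_apply (i j : B) (n : ℕ) (x : B →₀ ℝ) :
    ∃ a b : ℝ, ((M.geomReflection i * M.geomReflection j) ^ n) x
      = x + a • Finsupp.single i 1 + b • Finsupp.single j 1 := by
  have hσ : ∀ k z, ∃ c : ℝ, M.geomReflection k z = z + c • Finsupp.single k 1 :=
    fun k z => ⟨-(2 * M.pairing k z), by rw [geomReflection_apply, neg_smul, sub_eq_add_neg]⟩
  induction n with
  | zero => exact ⟨0, 0, by simp⟩
  | succ n ih =>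
    obtain ⟨a, b, h⟩ := ih
    obtain ⟨c, hc⟩ := hσ j (((M.geomReflection i * M.geomReflection j) ^ n) x)
    obtain ⟨d, hd⟩ := hσ i (M.geomReflection j (((M.geomReflection i * M.geomReflection j) ^ n) x))
    refine ⟨a + d, b + c, ?_⟩
    rw [pow_succ', Module.End.mul_apply, Module.End.mul_apply, hd, hc, h]
    module

lemma geomReflection_mul_pow_eq_one {i j : B} (hm : 2 ≤ M i j) :
    (M.geomReflection i * M.geomReflection j) ^ M i j = 1 := by
  set θ := Real.pi / M i j with hθ
  have hcoeff : M.cosCoeff i j = -Real.cos θ := rfl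
  have hsin : Real.sin θ ≠ 0 := by
    refine (Real.sin_pos_of_pos_of_lt_pi (by positivity) ?_).ne'
    exact div_lt_self Real.pi_pos (by exact_mod_cast hm)
  have hrot : Complex.exp (θ * Complex.I) ^ (2 * M i j) = 1 := by
    rw [← Complex.exp_nat_mul, ← Complex.exp_two_pi_mul_I, hθ]
    congr 1
    push_cast
    field_simp [(by exact_mod_cast (by omega : M i j ≠ 0) : (M i j : ℂ) ≠ 0)]
  -- `((geomReflection i * geomReflection j) ^ m) x - x` lies in the plane, where `planeCoord` is
  -- injective
  refine LinearMap.ext fun x => ?_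
  obtain ⟨a, b, hab⟩ := exists_geomReflection_mul_pow_apply i j (M i j) x
  have hx := planeCoord_geomReflection_mul_pow hcoeff (M i j) x
  rw [hrot, one_mul, hab, add_assoc, planeCoord_add, add_eq_left] at hx
  obtain ⟨rfl, rfl⟩ := eq_zero_of_planeCoord_eq_zero hcoeff hsin hx
  simp [hab]

lemma geomReflection_isLiftable : M.IsLiftable M.geomReflection := by
  intro i j
  rcases eq_or_ne i j with rfl | hij
  · rw [M.diagonal, pow_one, geomReflection_mul_self]
  rcases eq_or_ne (M i j) 0 with h | h
  · rw [h, pow_zero]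
  · exact geomReflection_mul_pow_eq_one (by have := M.off_diagonal i j hij; omega)

lemma geomReflection_mul_pow_apply_single {i j : B} (h : M i j = 0) (n : ℕ) :
    ((M.geomReflection i * M.geomReflection j) ^ n) (Finsupp.single i 1)
      = Finsupp.single i 1 + (2 * n : ℝ) • (Finsupp.single i 1 + Finsupp.single j 1) := by
  have hij := cosCoeff_of_eq_zero h
  have hji : M.cosCoeff j i = -1 := by rw [cosCoeff_comm, hij]
  have hfix : (M.geomReflection i * M.geomReflection j) (Finsupp.single i 1 + Finsupp.single j 1)
      = Finsupp.single i 1 + Finsupp.single j 1 := by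
    simp only [Module.End.mul_apply, geomReflection_apply, map_add, map_sub, map_smul,
      pairing_single, cosCoeff_self, hij, hji]
    module
  have hmove : (M.geomReflection i * M.geomReflection j) (Finsupp.single i 1)
      = Finsupp.single i 1 + (2 : ℝ) • (Finsupp.single i 1 + Finsupp.single j 1) := by
    simp only [Module.End.mul_apply, geomReflection_apply, map_sub, map_smul,
      pairing_single, cosCoeff_self, hij, hji]
    module
  induction n with
  | zero => simp
  | succ n ih =>
    rw [pow_succ', Module.End.mul_apply, ih, map_add, map_smul, hfix, hmove]
    push_cast
    module

end CoxeterMatrix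

namespace CoxeterSystem

variable {B W : Type*} [Group W] {M : CoxeterMatrix B} (cs : CoxeterSystem M W)

local prefix:100 "s " => cs.simple
local prefix:100 "π " => cs.wordProd
local prefix:100 "ℓ " => cs.length
local prefix:100 "ris " => cs.rightInvSeq

/-- In the geometric representation `(s i * s j) ^ n` moves `e i` to `e i + 2n (e i + e j)`. -/
theorem simple_mul_simple_pow_ne_one {i j : B} (h : M i j = 0) {n : ℕ} (hn : n ≠ 0) :
    (s i * s j) ^ n ≠ 1 := by
  have hij : i ≠ j := by rintro rfl; simp at h
  intro hone
  have := congrArg (fun w => cs.lift ⟨_, M.geomReflection_isLiftable⟩ w (Finsupp.single i 1) i) hone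
  simp [lift_apply_simple, M.geomReflection_mul_pow_apply_single h, hij, hn] at this

theorem rightInvSeq_append (ω α : List B) :
    ris (ω ++ α) = (ris ω).map (MulAut.conj (π α)⁻¹) ++ ris α := by
  induction ω with
  | nil => simp
  | cons i ω ih =>
    simp only [cons_append, rightInvSeq, ih, map_cons, wordProd_append, MulAut.conj_apply,
      mul_inv_rev, inv_inv]
    group

theorem rightInvSeq_alternatingWord (i j : B) (k : ℕ) :
    ris (alternatingWord i j k) = ((range k).map fun e => (s j * s i) ^ e * s j).reverse := by
  induction k generalizing i j with
  | zero => rfl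
  | succ k ih =>
    rw [alternatingWord_succ, rightInvSeq_concat, ih, range_succ_eq_map]
    simp only [map_reverse, map_map, concat_eq_append, map_cons, reverse_cons, pow_zero, one_mul]
    congr 2
    refine map_congr_left fun e _ => ?_
    simp only [Function.comp, MulAut.conj_apply, inv_simple]
    rw [Nat.succ_eq_add_one, pow_succ, ← mul_assoc, ← mul_pow_mul]
    group

theorem prod_map_alternatingWord {G : Type*} [Monoid G] (f : B → G) (i j : B) (m : ℕ) :
    ((alternatingWord i j (2 * m)).map f).prod = (f i * f j) ^ m := by
  induction m with
  | zero => simp [alternatingWord]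
  | succ m ih =>
    rw [mul_add_one, alternatingWord_succ', alternatingWord_succ']
    simp [ih, pow_succ', mul_assoc]

section ParityPerm

variable [DecidableEq W]

/-- Tits' construction: once lifted to `W`, these permutations show that the parity of the number
of occurrences of a reflection in `ris ω` depends only on `π ω`. -/
def parityPerm (i : B) : Equiv.Perm (W × ZMod 2) :=
  Function.Involutive.toPerm (fun p => (s i * p.1 * s i, p.2 + if p.1 = s i then 1 else 0)) <| by
    rintro ⟨x, e⟩
    have hx : x * s i = 1 ↔ x = s i := by rw [mul_eq_one_iff_eq_inv, inv_simple]
    simp [hx, mul_assoc, add_assoc, CharTwo.add_self_eq_zero]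

@[simp] theorem parityPerm_apply (i : B) (x : W) (e : ZMod 2) :
    cs.parityPerm i (x, e) = (s i * x * s i, e + if x = s i then 1 else 0) :=
  rfl

theorem prod_map_parityPerm_apply (ω : List B) (x : W) (e : ZMod 2) :
    (ω.map cs.parityPerm).prod (x, e) = (π ω * x * (π ω)⁻¹, e + (ris ω).count x) := by
  induction ω generalizing e with
  | nil => simp
  | cons i ω ih =>
    have hx : π ω * x * (π ω)⁻¹ = s i ↔ ((π ω)⁻¹ * s i * π ω == x) := by
      rw [beq_iff_eq]; constructor <;> intro h <;> rw [← h] <;> group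
    simp only [map_cons, prod_cons, Equiv.Perm.mul_apply, ih, parityPerm_apply, hx, rightInvSeq,
      count_cons, wordProd_cons]
    rw [Prod.mk.injEq]
    constructor
    · simp [mul_assoc]
    · split <;> simp [add_assoc]

theorem even_count_rightInvSeq_alternatingWord (i j : B) (x : W) :
    Even ((ris (alternatingWord i j (2 * M i j))).count x) := by
  have hperiod : ∀ e, (s j * s i) ^ (M i j + e) * s j = (s j * s i) ^ e * s j := fun e => by
    rw [pow_add, simple_mul_simple_pow', one_mul]
  rw [rightInvSeq_alternatingWord, count_reverse, two_mul, range_add, map_append, map_map]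
  simp only [Function.comp_def, hperiod, count_append]
  exact ⟨_, rfl⟩

theorem parityPerm_isLiftable : M.IsLiftable cs.parityPerm := by
  intro i j
  ext1 ⟨x, e⟩
  rw [← prod_map_alternatingWord, prod_map_parityPerm_apply,
    (even_count_rightInvSeq_alternatingWord cs i j x).natCast_zmod_two]
  have hπ : π (alternatingWord i j (2 * M i j)) = 1 := by
    rw [wordProd, prod_map_alternatingWord, simple_mul_simple_pow]
  simp [hπ]

theorem count_rightInvSeq_eq_of_wordProd_eq {ω ω' : List B} (h : π ω = π ω') (x : W) :
    ((ris ω).count x : ZMod 2) = (ris ω').count x := by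
  have hlift : ∀ ω, cs.lift ⟨_, cs.parityPerm_isLiftable⟩ (π ω) = (ω.map cs.parityPerm).prod := by
    intro ω
    rw [wordProd, map_list_prod, map_map]
    congr 1
    exact map_congr_left fun i _ => cs.lift_apply_simple _ i
  have := congrArg (fun w => (cs.lift ⟨_, cs.parityPerm_isLiftable⟩ w (x, 0)).2) h
  simpa [hlift, prod_map_parityPerm_apply] using this

end ParityPerm

theorem simple_mem_rightInvSeq_of_isRightDescent {ω : List B} {i : B}
    (h : cs.IsRightDescent (π ω) i) : s i ∈ ris ω := by
  classical
  -- compare `ω` with a reduced word ending in `i`, whose `ris` contains `s i` exactly once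
  obtain ⟨ω', hω', heq⟩ := cs.exists_isReduced (π ω * s i)
  have hprod : π (ω'.concat i) = π ω := by
    rw [wordProd_concat, ← heq, simple_mul_simple_cancel_right]
  have hred : cs.IsReduced (ω'.concat i) := by
    have := cs.length_mul_simple (π ω) i
    rw [IsRightDescent] at h
    rw [IsReduced, hprod, length_concat, ← hω'.eq, ← heq]
    omega
  have hmem : s i ∈ ris (ω'.concat i) := by rw [rightInvSeq_concat]; simp
  have hcount := cs.count_rightInvSeq_eq_of_wordProd_eq hprod (s i)
  rw [count_eq_one_of_mem hred.nodup_rightInvSeq hmem] at hcount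
  by_contra hnot
  rw [count_eq_zero_of_not_mem hnot] at hcount
  exact one_ne_zero hcount

theorem simple_mem_parabolic {I : Set B} {i : B} (hi : i ∈ I) : s i ∈ cs.parabolic I :=
  Subgroup.subset_closure (Set.mem_image_of_mem _ hi)

theorem wordProd_alternatingWord_mem_parabolic (i j : B) (k : ℕ) :
    π (alternatingWord i j k) ∈ cs.parabolic {i, j} := by
  induction k generalizing i j with
  | zero => exact one_mem _
  | succ k ih =>
    rw [alternatingWord_succ, wordProd_concat, Set.pair_comm]
    exact mul_mem (ih j i) (cs.simple_mem_parabolic (by simp))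

theorem wordProd_alternatingWord_mul_simple {i j c : B} (hc : c = i ∨ c = j) (n : ℕ) :
    ∃ n', π (alternatingWord i j n) * s c = π (alternatingWord i j n') ∨
      π (alternatingWord i j n) * s c = π (alternatingWord j i n') := by
  rcases n with _ | n
  · rcases hc with rfl | rfl
    · exact ⟨1, Or.inr (by simp [alternatingWord])⟩
    · exact ⟨1, Or.inl (by simp [alternatingWord])⟩
  · rcases hc with rfl | rfl
    · exact ⟨n + 1 + 1, Or.inr (by rw [alternatingWord_succ j c (n + 1), wordProd_concat])⟩
    · exact ⟨n, Or.inr (by rw [alternatingWord_succ, wordProd_concat,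
        simple_mul_simple_cancel_right])⟩

theorem exists_eq_wordProd_alternatingWord_of_mem_parabolic {i j : B} {x : W}
    (hx : x ∈ cs.parabolic {i, j}) :
    ∃ n, x = π (alternatingWord i j n) ∨ x = π (alternatingWord j i n) := by
  have step : ∀ x c, c = i ∨ c = j →
      (∃ n, x = π (alternatingWord i j n) ∨ x = π (alternatingWord j i n)) →
      ∃ n, x * s c = π (alternatingWord i j n) ∨ x * s c = π (alternatingWord j i n) := by
    rintro x c hc ⟨n, rfl | rfl⟩
    · exact cs.wordProd_alternatingWord_mul_simple hc n
    · obtain ⟨n', h⟩ := cs.wordProd_alternatingWord_mul_simple hc.symm n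
      exact ⟨n', h.symm⟩
  induction hx using Subgroup.closure_induction_right with
  | one => exact ⟨0, Or.inl rfl⟩
  | mul_right x _ y hy ih =>
    obtain ⟨c, hc, rfl⟩ := hy
    exact step x c hc ih
  | mul_inv_cancel x _ y hy ih =>
    obtain ⟨c, hc, rfl⟩ := hy
    rw [inv_simple]
    exact step x c hc ih

theorem simple_not_mem_rightInvSeq_alternatingWord {i j : B} (h : M i j = 0) (k : ℕ) :
    s i ∉ ris (alternatingWord i j k) := by
  rw [rightInvSeq_alternatingWord, mem_reverse, mem_map]
  rintro ⟨e, -, he⟩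
  apply cs.simple_mul_simple_pow_ne_one ((M.symmetric j i).trans h) (Nat.succ_ne_zero e)
  rw [pow_succ, ← mul_assoc, he, simple_mul_simple_self]

theorem length_mul_simple_of_forall_length_le {I : Set B} {w : W}
    (hmin : ∀ x ∈ cs.parabolic I, ℓ w ≤ ℓ (w * x)) {α : List B} (hα : π α ∈ cs.parabolic I)
    {i : B} (hi : i ∈ I) (hnot : s i ∉ ris α) :
    ℓ (w * π α * s i) = ℓ (w * π α) + 1 := by
  refine (cs.length_mul_simple _ i).resolve_right fun hdesc => ?_
  obtain ⟨ω, hω, rfl⟩ := cs.exists_isReduced w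
  have hmem : s i ∈ ris (ω ++ α) :=
    cs.simple_mem_rightInvSeq_of_isRightDescent (by rw [IsRightDescent, wordProd_append]; omega)
  rw [rightInvSeq_append, mem_append, mem_map] at hmem
  rcases hmem with ⟨r, hr, hconj⟩ | hα'
  · have hr_eq : r = π α * s i * (π α)⁻¹ := by
      rw [← hconj, MulAut.conj_apply]; group
    have hlt := (cs.isRightInversion_of_mem_rightInvSeq hω hr).2
    have hle := hmin r (hr_eq ▸ mul_mem (mul_mem hα (cs.simple_mem_parabolic hi)) (inv_mem hα))
    omega
  · exact hnot hα'

theorem length_mul_wordProd_alternatingWord {i j : B} (h : M i j = 0) {w : W}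
    (hmin : ∀ x ∈ cs.parabolic {i, j}, ℓ w ≤ ℓ (w * x)) (k : ℕ) :
    ℓ (w * π (alternatingWord i j k)) = ℓ w + k := by
  induction k generalizing i j with
  | zero => simp [alternatingWord]
  | succ k ih =>
    have h' : M j i = 0 := (M.symmetric j i).trans h
    rw [Set.pair_comm] at hmin
    rw [alternatingWord_succ, wordProd_concat, ← mul_assoc,
      cs.length_mul_simple_of_forall_length_le hmin (cs.wordProd_alternatingWord_mem_parabolic j i k)
        (by simp) (cs.simple_not_mem_rightInvSeq_alternatingWord h' k), ih h' hmin, add_assoc]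

theorem eq_zero_of_length_lt_length_mul_simple {i j : B} (h : M i j = 0) {w : W}
    (hmin : ∀ x ∈ cs.parabolic {i, j}, ℓ w ≤ ℓ (w * x)) {n : ℕ}
    (hj : ℓ (w * π (alternatingWord i j n)) < ℓ (w * π (alternatingWord i j n) * s j)) :
    n = 0 := by
  obtain _ | n := n
  · rfl
  have hlen := cs.length_mul_wordProd_alternatingWord h hmin (n + 1)
  have hlen' := cs.length_mul_wordProd_alternatingWord ((M.symmetric j i).trans h)
    (Set.pair_comm i j ▸ hmin) n
  rw [alternatingWord_succ, wordProd_concat, ← mul_assoc] at hlen hj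
  rw [simple_mul_simple_cancel_right, hlen', hlen] at hj
  omega

theorem forall_length_le_length_mul_of_mem_parabolic {i j : B} (h : M i j = 0) {w : W}
    (hi : ℓ w < ℓ (w * s i)) (hj : ℓ w < ℓ (w * s j)) :
    ∀ x ∈ cs.parabolic {i, j}, ℓ w ≤ ℓ (w * x) := by
  obtain ⟨x₀, hx₀, hx₀_min⟩ := (measure fun x => ℓ (w * x)).wf.has_min
    (cs.parabolic {i, j} : Set W) ⟨1, one_mem _⟩
  have hmin : ∀ x ∈ cs.parabolic {i, j}, ℓ (w * x₀) ≤ ℓ (w * x₀ * x) := fun x hx => by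
    rw [mul_assoc]
    exact not_lt.mp (hx₀_min _ (mul_mem hx₀ hx))
  suffices x₀ = 1 by
    subst this
    simpa using hmin
  have hw : w = w * x₀ * x₀⁻¹ := by group
  rw [← inv_eq_one]
  obtain ⟨n, hn | hn⟩ := cs.exists_eq_wordProd_alternatingWord_of_mem_parabolic (inv_mem hx₀)
  · rw [hw, hn] at hj
    rw [hn, cs.eq_zero_of_length_lt_length_mul_simple h hmin hj]
    rfl
  · rw [hw, hn] at hi
    rw [hn, cs.eq_zero_of_length_lt_length_mul_simple ((M.symmetric j i).trans h)
      (Set.pair_comm i j ▸ hmin) hi]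
    rfl

end CoxeterSystem

theorem stmt_4_general {B W : Type*} [Group W] {M : CoxeterMatrix B} (cs : CoxeterSystem M W)
    (w : W) (s t : B) (hinf : M s t = 0)
    (hs : cs.length w < cs.length (w * cs.simple s))
    (ht : cs.length w < cs.length (w * cs.simple t)) :
    ∀ k : ℕ,
      cs.length (w * cs.wordProd (alternatingWord s t k)) = cs.length w + k ∧
      cs.length (w * cs.wordProd (alternatingWord t s k)) = cs.length w + k := by
  have hmin := cs.forall_length_le_length_mul_of_mem_parabolic hinf hs ht
  exact fun k => ⟨cs.length_mul_wordProd_alternatingWord hinf hmin k,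
    cs.length_mul_wordProd_alternatingWord ((M.symmetric t s).trans hinf)
      (Set.pair_comm s t ▸ hmin) k⟩

theorem stmt_4 {B W : Type*} [Group W] {M : CoxeterMatrix B} (cs : CoxeterSystem M W)
    (hM : ∀ i i' : B, i ≠ i' → M i i' = 0 ∨ 3 ≤ M i i')
    (w : W) (s t : B) (hst : s ≠ t) (hinf : M s t = 0)
    (hs : cs.length w < cs.length (w * cs.simple s))
    (ht : cs.length w < cs.length (w * cs.simple t)) :
    ∀ k : ℕ,
      cs.length (w * cs.wordProd (alternatingWord s t k)) = cs.length w + k ∧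
      cs.length (w * cs.wordProd (alternatingWord t s k)) = cs.length w + k :=
  stmt_4_general cs w s t hinf hs ht
end

section
/- Let (W,S) be an even Coxeter system, t ∈ S, U = {s ∈ S : m_{st} < ∞}, and suppose for all distinct s,s' ∈ U with m_{st} > 2 and m_{s't} > 2 we have m_{ss'} = ∞ or s = s'. Fix s ∈ U with m_{st} > 2 and let u ∈ W_{{s,t}} have the reduced expression t s t ⋯ s t (an alternating word of odd length beginning and ending with t, of length < m_{st}). Then u is (U∖{t}, U∖{t})-reduced: for every r ∈ U ∖ {t}, both ℓ(ru) > ℓ(u) and ℓ(ur) > ℓ(u). -/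
open CoxeterSystem List

/-!
Since `M` is even, sending `s` and `t` to the reflections of a `2m`-gon (`m = M s t`) in the two
walls of a fixed chamber, and every other generator to `1`, defines an action of `W` on the `2m`
chambers. A generator moves a chamber by at most one step, so `ℓ w` bounds the distance from
chamber `0` to `w • 0`. The element `u = t s t ⋯ t` of length `2k + 1` sends chamber `0` to
chamber `2k + 1`, and for `r ≠ t` both `r u` and `u r` send it to chamber `2k + 1` or `± (2k + 2)`,
still at distance at least `2k + 1` because `2k + 1 < m`. Hence `ℓ (r u) ≥ 2k + 1 ≥ ℓ u`, and the
inequality is strict because multiplying by a generator changes the parity of the length.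
-/

open Equiv

namespace ZMod

lemma natAbs_valMinAbs_sub_le {n : ℕ} (a x : ZMod n) :
    (a - x).valMinAbs.natAbs ≤ x.valMinAbs.natAbs + a.valMinAbs.natAbs := by
  rw [← neg_sub, natAbs_valMinAbs_neg, sub_eq_add_neg]
  refine (natAbs_valMinAbs_add_le x (-a)).trans ?_
  rw [← natAbs_valMinAbs_neg a]
  exact Int.natAbs_add_le _ _

lemma natAbs_valMinAbs_one_le (n : ℕ) : (1 : ZMod n).valMinAbs.natAbs ≤ 1 := by
  rcases n with - | n
  · rfl
  · exact natAbs_min_of_le_div_two _ _ 1 (by simp [coe_valMinAbs]) (natAbs_valMinAbs_le _)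

lemma natAbs_valMinAbs_natCast_of_le_half {n a : ℕ} (ha : a ≤ n / 2) :
    (a : ZMod n).valMinAbs.natAbs = a := by
  rw [valMinAbs_natCast_of_le_half ha, Int.natAbs_natCast]

end ZMod

lemma Equiv.subLeft_mul_subLeft {G : Type*} [AddCommGroup G] (a b : G) :
    Equiv.subLeft a * Equiv.subLeft b = Equiv.addRight (a - b) := by
  ext x
  simp only [Perm.mul_apply, subLeft_apply, coe_addRight]
  abel

namespace CoxeterMatrix

variable {B : Type*} (M : CoxeterMatrix B) (s t : B)

open scoped Classical in
/-- `ZMod (2 * M s t)` indexes the chambers of a `2 * M s t`-gon, chamber `x` being adjacent to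
`x ± 1`; `s` and `t` act as the reflections in the two walls of chamber `0`. -/
noncomputable def chamberReflection (i : B) : Perm (ZMod (2 * M s t)) :=
  if i = s then Equiv.subLeft (-1) else if i = t then Equiv.subLeft 1 else 1

variable {M s t}

lemma chamberReflection_left : M.chamberReflection s t s = Equiv.subLeft (-1) := by
  simp [chamberReflection]

lemma chamberReflection_right (hst : s ≠ t) : M.chamberReflection s t t = Equiv.subLeft 1 := by
  simp [chamberReflection, hst.symm]

lemma chamberReflection_of_ne {i : B} (his : i ≠ s) (hit : i ≠ t) :
    M.chamberReflection s t i = 1 := by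
  simp [chamberReflection, his, hit]

lemma chamberReflection_mul_self (i : B) :
    M.chamberReflection s t i * M.chamberReflection s t i = 1 := by
  unfold chamberReflection
  split_ifs <;> simp [subLeft_mul_subLeft]

lemma chamberReflection_apply_of_ne_right {i : B} (hit : i ≠ t) (x : ZMod (2 * M s t)) :
    M.chamberReflection s t i x = x ∨ M.chamberReflection s t i x = -1 - x := by
  by_cases his : i = s
  · subst his
    simp [chamberReflection_left]
  · simp [chamberReflection_of_ne his hit]

lemma natAbs_valMinAbs_chamberReflection_le (i : B) (x : ZMod (2 * M s t)) :
    (M.chamberReflection s t i x).valMinAbs.natAbs ≤ x.valMinAbs.natAbs + 1 := by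
  have hone := ZMod.natAbs_valMinAbs_one_le (2 * M s t)
  unfold chamberReflection
  split_ifs
  · have := ZMod.natAbs_valMinAbs_sub_le (-1) x
    rw [ZMod.natAbs_valMinAbs_neg] at this
    simp only [subLeft_apply]
    omega
  · have := ZMod.natAbs_valMinAbs_sub_le 1 x
    simp only [subLeft_apply]
    omega
  · simp

variable (s t)

lemma isLiftable_chamberReflection (heven : M.IsEven) :
    M.IsLiftable (M.chamberReflection s t) := by
  intro i i'
  rcases eq_or_ne i i' with rfl | hii
  · rw [M.diagonal, pow_one, chamberReflection_mul_self]
  have htwo : (2 * M s t : ZMod (2 * M s t)) = 0 := by exact_mod_cast ZMod.natCast_self _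
  by_cases hpair : i = s ∧ i' = t ∨ i = t ∧ i' = s
  -- `s t` and `t s` are translations by `∓2`; for any other pair one factor is trivial
  · rcases hpair with ⟨rfl, rfl⟩ | ⟨rfl, rfl⟩
    · rw [chamberReflection_left, chamberReflection_right hii, Equiv.subLeft_mul_subLeft,
        Equiv.nsmul_addRight, nsmul_eq_mul, show (M i i' : ZMod (2 * M i i')) * (-1 - 1) =
          -(2 * M i i') by ring, htwo, neg_zero, Equiv.addRight_zero]
    · rw [chamberReflection_left, chamberReflection_right hii.symm, Equiv.subLeft_mul_subLeft,
        Equiv.nsmul_addRight, nsmul_eq_mul, show (M i i' : ZMod (2 * M i' i)) * (1 - -1) =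
          2 * M i' i by rw [M.symmetric]; ring, htwo, Equiv.addRight_zero]
  · have htriv : M.chamberReflection s t i = 1 ∨ M.chamberReflection s t i' = 1 := by
      by_cases his : i = s <;> by_cases hit : i = t <;> by_cases his' : i' = s <;>
        by_cases hit' : i' = t <;> simp_all [chamberReflection_of_ne]
    have hinv : (M.chamberReflection s t i * M.chamberReflection s t i') ^ 2 = 1 := by
      rcases htriv with h | h <;> simp [h, sq, chamberReflection_mul_self]
    obtain ⟨c, hc⟩ := heven i i' hii
    rw [hc, ← two_mul, pow_mul, hinv, one_pow]

end CoxeterMatrix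

namespace CoxeterSystem

variable {B W : Type*} [Group W] {M : CoxeterMatrix B} (cs : CoxeterSystem M W)

theorem le_length_of_map_simple_mul_le {G : Type*} [Monoid G] (f : W →* G) (ν : G → ℕ)
    (hone : ν 1 = 0) (hsimple : ∀ i g, ν (f (cs.simple i) * g) ≤ ν g + 1) (w : W) :
    ν (f w) ≤ cs.length w := by
  have hword (ω : List B) : ν (f (cs.wordProd ω)) ≤ ω.length := by
    induction ω with
    | nil => simp [hone]
    | cons i ω ih =>
      rw [wordProd_cons, map_mul, length_cons]
      exact (hsimple i _).trans (by omega)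
  obtain ⟨ω, hω, rfl⟩ := cs.exists_isReduced w
  exact hω.eq ▸ hword ω

section chamberAction

variable (heven : M.IsEven) (s t : B)

noncomputable def chamberAction : W →* Perm (ZMod (2 * M s t)) :=
  cs.lift ⟨M.chamberReflection s t, M.isLiftable_chamberReflection s t heven⟩

lemma chamberAction_simple (i : B) :
    cs.chamberAction heven s t (cs.simple i) = M.chamberReflection s t i :=
  cs.lift_apply_simple _ i

theorem natAbs_valMinAbs_chamberAction_apply_zero_le_length (w : W) :
    (cs.chamberAction heven s t w 0).valMinAbs.natAbs ≤ cs.length w :=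
  cs.le_length_of_map_simple_mul_le _ (fun g : Perm (ZMod (2 * M s t)) ↦ (g 0).valMinAbs.natAbs)
    (by simp) (fun i g ↦ by
      simpa [chamberAction_simple] using M.natAbs_valMinAbs_chamberReflection_le i (g 0)) w

variable {s t}

lemma chamberAction_wordProd_alternatingWord_odd (hst : s ≠ t) (k : ℕ) :
    cs.chamberAction heven s t (cs.wordProd (alternatingWord s t (2 * k + 1))) =
      Equiv.subLeft ((2 * k + 1 : ℕ) : ZMod (2 * M s t)) := by
  rw [prod_alternatingWord_eq_mul_pow, if_neg (by simp [parity_simps]),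
    show (2 * k + 1) / 2 = k by omega, map_mul, map_pow, map_mul, chamberAction_simple,
    chamberAction_simple, CoxeterMatrix.chamberReflection_left,
    CoxeterMatrix.chamberReflection_right hst, subLeft_mul_subLeft, Equiv.nsmul_addRight]
  ext x
  simp only [Perm.mul_apply, subLeft_apply, coe_addRight, nsmul_eq_mul]
  push_cast
  ring

end chamberAction

variable {s t : B}

theorem le_length_simple_mul_alternatingWord (heven : M.IsEven) {r : B} (hrt : r ≠ t) {k : ℕ}
    (hk : 2 * k + 1 < M s t) :
    2 * k + 1 ≤ cs.length (cs.simple r * cs.wordProd (alternatingWord s t (2 * k + 1))) := by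
  have hst : s ≠ t := by rintro rfl; simp at hk
  refine le_trans ?_ (cs.natAbs_valMinAbs_chamberAction_apply_zero_le_length heven s t _)
  rw [map_mul, Perm.mul_apply, cs.chamberAction_wordProd_alternatingWord_odd heven hst,
    chamberAction_simple, Equiv.subLeft_apply, sub_zero]
  rcases M.chamberReflection_apply_of_ne_right hrt ((2 * k + 1 : ℕ) : ZMod (2 * M s t))
    with h | h <;> rw [h]
  · rw [ZMod.natAbs_valMinAbs_natCast_of_le_half (by omega)]
  · rw [show -1 - ((2 * k + 1 : ℕ) : ZMod (2 * M s t)) = -((2 * k + 2 : ℕ) : ZMod _) by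
      push_cast; ring, ZMod.natAbs_valMinAbs_neg,
      ZMod.natAbs_valMinAbs_natCast_of_le_half (by omega)]
    omega

theorem le_length_alternatingWord_mul_simple (heven : M.IsEven) {r : B} (hrt : r ≠ t) {k : ℕ}
    (hk : 2 * k + 1 < M s t) :
    2 * k + 1 ≤ cs.length (cs.wordProd (alternatingWord s t (2 * k + 1)) * cs.simple r) := by
  have hst : s ≠ t := by rintro rfl; simp at hk
  refine le_trans ?_ (cs.natAbs_valMinAbs_chamberAction_apply_zero_le_length heven s t _)
  rw [map_mul, Perm.mul_apply, cs.chamberAction_wordProd_alternatingWord_odd heven hst,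
    chamberAction_simple, Equiv.subLeft_apply]
  rcases M.chamberReflection_apply_of_ne_right hrt 0 with h | h <;> rw [h]
  · rw [sub_zero, ZMod.natAbs_valMinAbs_natCast_of_le_half (by omega)]
  · rw [show ((2 * k + 1 : ℕ) : ZMod (2 * M s t)) - (-1 - 0) = ((2 * k + 2 : ℕ) : ZMod _) by
      push_cast; ring, ZMod.natAbs_valMinAbs_natCast_of_le_half (by omega)]
    omega

end CoxeterSystem

theorem stmt_7_general {B W : Type*} [Group W] {M : CoxeterMatrix B} (cs : CoxeterSystem M W)
    (heven : M.IsEven) (t s : B) (k : ℕ) (hk : 2 * k + 1 < M s t) :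
    ∀ r ∈ ({a | M a t ≠ 0} \ {t} : Set B),
      cs.length (cs.wordProd (alternatingWord s t (2 * k + 1))) <
        cs.length (cs.simple r * cs.wordProd (alternatingWord s t (2 * k + 1))) ∧
      cs.length (cs.wordProd (alternatingWord s t (2 * k + 1))) <
        cs.length (cs.wordProd (alternatingWord s t (2 * k + 1)) * cs.simple r) := by
  rintro r ⟨-, hrt⟩
  have hu := cs.length_wordProd_le (alternatingWord s t (2 * k + 1))
  rw [length_alternatingWord] at hu
  exact ⟨(hu.trans (cs.le_length_simple_mul_alternatingWord heven hrt hk)).lt_of_ne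
      (cs.length_simple_mul_ne _ r).symm,
    (hu.trans (cs.le_length_alternatingWord_mul_simple heven hrt hk)).lt_of_ne
      (cs.length_mul_simple_ne _ r).symm⟩

theorem stmt_7 {B W : Type*} [Group W] {M : CoxeterMatrix B} (cs : CoxeterSystem M W)
    (heven : M.IsEven) (t s : B) (h2 : 2 < M s t) (hfin : M s t ≠ 0)
    (hS' : ∀ a a' : B, a ≠ a' → M a t ≠ 0 → M a' t ≠ 0 →
      2 < M a t → 2 < M a' t → M a a' = 0)
    (k : ℕ) (hk1 : 1 ≤ k) (hk : 2 * k + 1 < M s t) :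
    ∀ r ∈ ({a | M a t ≠ 0} \ {t} : Set B),
      cs.length (cs.wordProd (alternatingWord s t (2 * k + 1))) <
        cs.length (cs.simple r * cs.wordProd (alternatingWord s t (2 * k + 1))) ∧
      cs.length (cs.wordProd (alternatingWord s t (2 * k + 1))) <
        cs.length (cs.wordProd (alternatingWord s t (2 * k + 1)) * cs.simple r) :=
  stmt_7_general cs heven t s k hk
end

section
/- Let (W,S) be an even Coxeter system, t ∈ S, U = {s ∈ S : m_{st} < ∞}, and let c be the color map c(w) = (g_{UT}(w)W_{T∖{t}})_{T spherical, t∈T}. If w, w' ∈ W_U satisfy c(w) = c(w') and V := S(w⁻¹w') is spherical, then t ∉ V; i.e., if two vertices of a common Coxeter cell of spherical type V have the same color, then w⁻¹w' ∈ W_{V∖{t}}. -/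
open CoxeterSystem List
open scoped Pointwise

/-! Let `v = w⁻¹w'` and `V = S(v)`. The retraction `g_V` fixes `v`, and the colour condition at
`T = V` sends `g_V v` into `W_{V ∖ {t}}`. The retraction killing only `t` fixes `W_{V ∖ {t}}` but
deletes every `t` from a word, so it would shorten a reduced word of `v` containing `t`; hence
`t ∉ V`. -/

namespace CoxeterSystem

variable {B W : Type*} [Group W] {M : CoxeterMatrix B} (cs : CoxeterSystem M W)

theorem wordProd_mem_parabolic {T : Set B} {ω : List B} (h : ∀ i ∈ ω, i ∈ T) :
    cs.wordProd ω ∈ cs.parabolic T := by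
  induction ω with
  | nil => exact one_mem _
  | cons i ω ih =>
    rw [wordProd_cons]
    exact mul_mem (Subgroup.subset_closure ⟨i, h i mem_cons_self, rfl⟩)
      (ih fun j hj => h j (mem_cons_of_mem i hj))

theorem mem_parabolic_support (w : W) : w ∈ cs.parabolic (cs.support w) := by
  obtain ⟨ω, hω, rfl⟩ := cs.exists_isReduced w
  exact cs.wordProd_mem_parabolic fun i hi => ⟨ω, hω, rfl, hi⟩

theorem parabolic_mono {T T' : Set B} (h : T ⊆ T') : cs.parabolic T ≤ cs.parabolic T' :=
  Subgroup.closure_mono (Set.image_mono h)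

theorem map_eq_self_of_mem_parabolic {g : W →* W} {T : Set B}
    (hg : ∀ i ∈ T, g (cs.simple i) = cs.simple i) {x : W} (hx : x ∈ cs.parabolic T) :
    g x = x :=
  (Subgroup.closure_le (MonoidHom.eqLocus g (MonoidHom.id W))).2
    (by rintro _ ⟨i, hi, rfl⟩; exact hg i hi) hx

theorem isLiftable_ite_simple_one (heven : M.IsEven) (T : Set B) [DecidablePred (· ∈ T)] :
    M.IsLiftable (fun i => if i ∈ T then cs.simple i else 1) := by
  intro i i'
  have hpow : ∀ j, i ≠ i' → cs.simple j ^ M i i' = 1 := fun j hne => by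
    obtain ⟨k, hk⟩ := heven i i' hne
    rw [hk, ← two_mul, pow_mul, simple_sq, one_pow]
  by_cases hi : i ∈ T <;> by_cases hi' : i' ∈ T <;> simp only [hi, hi', if_true, if_false,
    mul_one, one_mul, one_pow]
  · exact cs.simple_mul_simple_pow i i'
  · exact hpow i fun h => hi' (h ▸ hi)
  · exact hpow i' fun h => hi (h ▸ hi')

/-- The map `g_{UT}` of the paper, extended to all of `W`; well defined because every relation `(s s')^m = 1` with
`s ∉ T` or `s' ∉ T` has even `m`. -/
noncomputable def parabolicRetraction (heven : M.IsEven) (T : Set B) : W →* W :=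
  open Classical in
  cs.lift ⟨fun i => if i ∈ T then cs.simple i else 1, cs.isLiftable_ite_simple_one heven T⟩

variable (heven : M.IsEven) {T : Set B}

theorem parabolicRetraction_simple_of_mem {i : B} (hi : i ∈ T) :
    cs.parabolicRetraction heven T (cs.simple i) = cs.simple i := by
  classical
  simp [parabolicRetraction, hi]

theorem parabolicRetraction_simple_of_notMem {i : B} (hi : i ∉ T) :
    cs.parabolicRetraction heven T (cs.simple i) = 1 := by
  classical
  simp [parabolicRetraction, hi]

theorem parabolicRetraction_wordProd [DecidablePred (· ∈ T)] (ω : List B) :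
    cs.parabolicRetraction heven T (cs.wordProd ω) = cs.wordProd (ω.filter (· ∈ T)) := by
  induction ω with
  | nil => simp
  | cons i ω ih =>
    rw [wordProd_cons, map_mul, ih]
    by_cases hi : i ∈ T
    · rw [cs.parabolicRetraction_simple_of_mem heven hi, filter_cons_of_pos (by simpa using hi),
        wordProd_cons]
    · rw [cs.parabolicRetraction_simple_of_notMem heven hi, one_mul,
        filter_cons_of_neg (by simpa using hi)]

theorem parabolicRetraction_eq_self {x : W} (hx : x ∈ cs.parabolic T) :
    cs.parabolicRetraction heven T x = x :=
  cs.map_eq_self_of_mem_parabolic (fun _ => cs.parabolicRetraction_simple_of_mem heven) hx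

include heven in
theorem support_subset_of_mem_parabolic {x : W} (hx : x ∈ cs.parabolic T) :
    cs.support x ⊆ T := by
  classical
  rintro t ⟨ω, hω, rfl, htω⟩
  by_contra htT
  have hfix : cs.parabolicRetraction heven {t}ᶜ (cs.wordProd ω) = cs.wordProd ω :=
    cs.parabolicRetraction_eq_self heven
      (cs.parabolic_mono (fun i hi (hit : i = t) => htT (hit ▸ hi)) hx)
  have hshorter : (ω.filter (· ∈ ({t}ᶜ : Set B))).length < ω.length :=
    length_filter_lt_length_iff_exists.2 ⟨t, htω, by simp⟩
  have hle := cs.length_wordProd_le (ω.filter (· ∈ ({t}ᶜ : Set B)))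
  rw [← cs.parabolicRetraction_wordProd heven, hfix, hω] at hle
  omega

end CoxeterSystem

theorem stmt_19_general {B W : Type*} [Group W] {M : CoxeterMatrix B} (cs : CoxeterSystem M W)
    (heven : M.IsEven) (t : B) (w w' : W)
    (hc : ∀ T : Set B, cs.IsSpherical T → t ∈ T →
      ∀ g : W →* W, (∀ i ∈ T, g (cs.simple i) = cs.simple i) →
        (∀ i ∉ T, g (cs.simple i) = 1) →
        g w • (cs.parabolic (T \ {t}) : Set W) =
          g w' • (cs.parabolic (T \ {t}) : Set W))
    (hsph : cs.IsSpherical (cs.support (w⁻¹ * w'))) :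
    t ∉ cs.support (w⁻¹ * w') ∧
      w⁻¹ * w' ∈ cs.parabolic (cs.support (w⁻¹ * w') \ {t}) := by
  set V := cs.support (w⁻¹ * w')
  have htV : t ∉ V := by
    intro ht
    let g := cs.parabolicRetraction heven V
    have hgv : g (w⁻¹ * w') ∈ cs.parabolic (V \ {t}) := by
      rw [map_mul, map_inv, ← leftCoset_eq_iff]
      exact hc V hsph ht g (fun _ => cs.parabolicRetraction_simple_of_mem heven)
        (fun _ => cs.parabolicRetraction_simple_of_notMem heven)
    rw [cs.parabolicRetraction_eq_self heven (cs.mem_parabolic_support _)] at hgv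
    exact (cs.support_subset_of_mem_parabolic heven hgv ht).2 rfl
  exact ⟨htV, by rw [Set.sdiff_singleton_eq_self htV]; exact cs.mem_parabolic_support _⟩

theorem stmt_19 {B W : Type*} [Group W] {M : CoxeterMatrix B} (cs : CoxeterSystem M W)
    (heven : M.IsEven) (t : B) (w w' : W)
    (hw : w ∈ cs.parabolic {s : B | M s t ≠ 0})
    (hw' : w' ∈ cs.parabolic {s : B | M s t ≠ 0})
    (hc : ∀ T : Set B, cs.IsSpherical T → t ∈ T →
      ∀ g : W →* W, (∀ i ∈ T, g (cs.simple i) = cs.simple i) →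
        (∀ i ∉ T, g (cs.simple i) = 1) →
        g w • (cs.parabolic (T \ {t}) : Set W) =
          g w' • (cs.parabolic (T \ {t}) : Set W))
    (hsph : cs.IsSpherical (cs.support (w⁻¹ * w'))) :
    t ∉ cs.support (w⁻¹ * w') ∧
      w⁻¹ * w' ∈ cs.parabolic (cs.support (w⁻¹ * w') \ {t}) :=
  stmt_19_general cs heven t w w' hc hsph
end
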